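/- For non-trivial connected graphs G and H (each with at least two vertices): if rc(G) ≥ 1 then rc(G ∘ H) = rc(G), and if rc(G) = 0 then rc(G ∘ H) = min{1, rc(H)}, where ∘ denotes the lexicographic product. -/

import Mathlib

open SimpleGraph

/-- The cop's sequence of positions, given his initial vertex `c₀` and a
(history-dependent) strategy `F`, where `F n` determines the cop's `(n+1)`-st
position from the robber's positions `r 0, …, r n` seen so far. -/
def copSeq {V : Type*} (c₀ : V) (F : (n : ℕ) → (Fin (n + 1) → V) → V)
    (r : ℕ → V) : ℕ → V
  | 0 => c₀
  | n + 1 => F n (fun i : Fin (n + 1) => r i)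

/-- The cop has a winning strategy in the cop and robber game with radius of
capture `k` on the graph `G`: the cop chooses a starting vertex and a strategy
such that, against every legal play of the robber (at each step the robber
stays or moves to an adjacent vertex; his moves may depend on the whole
history), the cop's play is legal and at some point of the game the distance
between the two players is at most `k`. -/
def CopWinRC {V : Type*} (G : SimpleGraph V) (k : ℕ) : Prop :=
  ∃ (c₀ : V) (F : (n : ℕ) → (Fin (n + 1) → V) → V),
    ∀ r : ℕ → V,
      (∀ i, r (i + 1) = r i ∨ G.Adj (r i) (r (i + 1))) →
      ((∀ n, copSeq c₀ F r (n + 1) = copSeq c₀ F r n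
            ∨ G.Adj (copSeq c₀ F r n) (copSeq c₀ F r (n + 1))) ∧
        ∃ n, G.dist (copSeq c₀ F r n) (r n) ≤ k
           ∨ G.dist (copSeq c₀ F r (n + 1)) (r n) ≤ k)

/-- The radius capture number of `G`: the least `k` such that the cop wins
the cop and robber game with radius of capture `k`. -/
noncomputable def rcNum {V : Type*} (G : SimpleGraph V) : ℕ :=
  sInf {k | CopWinRC G k}

/-- Eccentricity of a vertex: the maximum distance to another vertex. -/
noncomputable def graphEcc {V : Type*} (G : SimpleGraph V) (v : V) : ℕ :=
  sSup (Set.range (G.dist v))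

/-- Radius of a graph: the minimum eccentricity. -/
noncomputable def graphRad {V : Type*} (G : SimpleGraph V) : ℕ :=
  sInf (Set.range (graphEcc G))

/-- The lexicographic product of two graphs: `(g₁,h₁) ~ (g₂,h₂)` iff
`g₁ ~ g₂`, or `g₁ = g₂` and `h₁ ~ h₂`. -/
def lexProd {V W : Type*} (G : SimpleGraph V) (H : SimpleGraph W) :
    SimpleGraph (V × W) where
  Adj x y := G.Adj x.1 y.1 ∨ (x.1 = y.1 ∧ H.Adj x.2 y.2)
  symm := by
    constructor
    rintro x y (h | ⟨h1, h2⟩)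
    · exact Or.inl h.symm
    · exact Or.inr ⟨h1.symm, h2.symm⟩
  loopless := by
    constructor
    rintro x (h | ⟨-, h⟩)
    · exact G.irrefl h
    · exact H.irrefl h

/-!
Cop and robber with radius of capture `k` is a reachability game, so the cop wins iff some start
`c₀` lies, against every robber start, in the inductively defined winning region `CopWins`; on a
finite graph she wins from there positionally, decreasing the number of rounds she still needs.

In `G ∘ H` every vertex over a `G`-neighbour of `a` is adjacent to the whole fiber over `a`, so
distances between different fibers are the `G`-distances and the first coordinates of a play in
`G ∘ H` form a play in `G`. Hence a strategy in `G ∘ H` projects to `G`, and a strategy in `G`,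
played in one layer, brings the cop within `k` of the robber unless she ends on his fiber; there she
either moves onto him, steps to a neighbouring fiber (distance `1`), or, if `H` is cop-win, plays
`H`'s strategy inside the fiber. If `H` is not cop-win the robber evades her inside her own fiber,
jumping to her new fiber whenever she leaves it, so `G ∘ H` is not cop-win.
-/

namespace SimpleGraph

section Game

variable {α : Type*} (Γ : SimpleGraph α) (k : ℕ)

/-- Stated as in `CopWinRC`, whose legality conditions are then `LegalMove`s by definition. -/
def LegalMove (a b : α) : Prop := b = a ∨ Γ.Adj a b

inductive CopWins : α → α → Prop
  | capture {c r : α} (c' : α) : Γ.LegalMove c c' → Γ.dist c' r ≤ k → CopWins c r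
  | step {c r : α} (c' : α) : Γ.LegalMove c c' →
      (∀ r', Γ.LegalMove r r' → CopWins c' r') → CopWins c r

def CopWinsWithin : ℕ → α → α → Prop
  | 0, _, _ => False
  | n + 1, c, r => ∃ c', Γ.LegalMove c c' ∧
      (Γ.dist c' r ≤ k ∨ ∀ r', Γ.LegalMove r r' → CopWinsWithin n c' r')

variable {Γ k}

lemma LegalMove.map {β : Type*} {Γ' : SimpleGraph β} (f : Γ →g Γ') {a b : α}
    (h : Γ.LegalMove a b) : Γ'.LegalMove (f a) (f b) :=
  h.imp (congrArg f) f.map_rel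

lemma exists_legalMove_not_copWins {c r c' : α} (h : ¬ Γ.CopWins k c r)
    (hc : Γ.LegalMove c c') :
    ∃ r', Γ.LegalMove r r' ∧ ¬ Γ.CopWins k c' r' := by
  by_contra! hr
  exact h (.step c' hc hr)

lemma CopWinsWithin.succ {n : ℕ} :
    ∀ {c r : α}, Γ.CopWinsWithin k n c r → Γ.CopWinsWithin k (n + 1) c r := by
  induction n with
  | zero => exact fun h => h.elim
  | succ n ih =>
    rintro c r ⟨c', hc', hwin⟩
    exact ⟨c', hc', hwin.imp_right fun h r' hr' => ih (h r' hr')⟩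

lemma CopWinsWithin.mono {c r : α} {n m : ℕ} (hnm : n ≤ m) (h : Γ.CopWinsWithin k n c r) :
    Γ.CopWinsWithin k m c r := by
  induction hnm with
  | refl => exact h
  | step _ ih => exact ih.succ

lemma CopWins.exists_copWinsWithin [Finite α] {c r : α} (h : Γ.CopWins k c r) :
    ∃ n, Γ.CopWinsWithin k n c r := by
  induction h with
  | @capture c r c' hc' hdist => exact ⟨1, c', hc', Or.inl hdist⟩
  | @step c r c' hc' _ ih =>
    -- finitely many robber moves, so one bound works for all of them
    have : ∀ᶠ n in Filter.atTop, ∀ r', Γ.LegalMove r r' → Γ.CopWinsWithin k n c' r' :=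
      Filter.eventually_all.2 fun r' => Filter.eventually_imp_distrib_left.2 fun hr' =>
        (ih r' hr').elim fun n hn => Filter.eventually_atTop.2 ⟨n, fun _ hm => hn.mono hm⟩
    obtain ⟨n, hn⟩ := this.exists
    exact ⟨n + 1, c', hc', Or.inr hn⟩

/-- A move realising the least `n` with `CopWinsWithin Γ k (n + 1) c r` works for every such `n`. -/
lemma exists_legalMove_copWinsWithin (c r : α) :
    ∃ c', Γ.LegalMove c c' ∧ ∀ n, Γ.CopWinsWithin k (n + 1) c r →
      Γ.dist c' r ≤ k ∨ ∀ r', Γ.LegalMove r r' → Γ.CopWinsWithin k n c' r' := by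
  classical
  by_cases h : ∃ n, Γ.CopWinsWithin k (n + 1) c r
  · obtain ⟨c', hc', hwin⟩ := Nat.find_spec h
    exact ⟨c', hc', fun n _ => hwin.imp_right fun hw r' hr' =>
      (hw r' hr').mono (Nat.find_min' h ‹_›)⟩
  · exact ⟨c, Or.inl rfl, fun n hn => (h ⟨n, hn⟩).elim⟩

lemma exists_capture_of_copWinsWithin {σ : α → α → α}
    (hσ : ∀ c r n, Γ.CopWinsWithin k (n + 1) c r →
      Γ.dist (σ c r) r ≤ k ∨ ∀ r', Γ.LegalMove r r' → Γ.CopWinsWithin k n (σ c r) r')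
    {c r : ℕ → α} (hc : ∀ i, c (i + 1) = σ (c i) (r i)) (hr : ∀ i, Γ.LegalMove (r i) (r (i + 1)))
    (n i : ℕ) (h : Γ.CopWinsWithin k n (c i) (r i)) : ∃ j, Γ.dist (c (j + 1)) (r j) ≤ k := by
  induction n generalizing i with
  | zero => exact h.elim
  | succ n ih =>
    rcases hσ _ _ n h with hcap | hwin
    · exact ⟨i, hc i ▸ hcap⟩
    · exact ih (i + 1) (hc i ▸ hwin _ (hr i))

def positionalStrategy (σ : α → α → α) (c₀ : α) : (n : ℕ) → (Fin (n + 1) → α) → α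
  | 0, h => σ c₀ (h 0)
  | n + 1, h => σ (positionalStrategy σ c₀ n fun i => h i.castSucc) (h (Fin.last (n + 1)))

lemma copSeq_positionalStrategy (σ : α → α → α) (c₀ : α) (r : ℕ → α) (n : ℕ) :
    copSeq c₀ (positionalStrategy σ c₀) r (n + 1) =
      σ (copSeq c₀ (positionalStrategy σ c₀) r n) (r n) := by
  cases n <;> rfl

theorem copWinRC_of_copWins [Finite α] {c₀ : α} (h : ∀ r₀, Γ.CopWins k c₀ r₀) :
    CopWinRC Γ k := by
  choose σ hσmove hσwin using exists_legalMove_copWinsWithin (Γ := Γ) (k := k)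
  refine ⟨c₀, positionalStrategy σ c₀, fun r hr => ⟨fun n => ?_, ?_⟩⟩
  · rw [copSeq_positionalStrategy]
    exact hσmove _ _
  · obtain ⟨n, hn⟩ := (h (r 0)).exists_copWinsWithin
    obtain ⟨j, hj⟩ := exists_capture_of_copWinsWithin hσwin
      (copSeq_positionalStrategy σ c₀ r) hr n 0 hn
    exact ⟨j, Or.inr hj⟩

def robberSeq (r₀ : α) (F : (n : ℕ) → (Fin (n + 1) → α) → α) (ρ : α → α → α) : ℕ → α
  | 0 => r₀
  | n + 1 => ρ (F n fun i => robberSeq r₀ F ρ i) (robberSeq r₀ F ρ n)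

/-- Well defined because the cop's move `copSeq c₀ F r (i + 1)` only depends on `r 0, …, r i`. -/
lemma exists_robberSeq (c₀ r₀ : α) (F : (n : ℕ) → (Fin (n + 1) → α) → α) (ρ : α → α → α) :
    ∃ r : ℕ → α, r 0 = r₀ ∧ ∀ i, r (i + 1) = ρ (copSeq c₀ F r (i + 1)) (r i) :=
  ⟨robberSeq r₀ F ρ, by rw [robberSeq], fun i => by rw [robberSeq]; rfl⟩

theorem CopWinRC.exists_copWins (h : CopWinRC Γ k) : ∃ c₀, ∀ r₀, Γ.CopWins k c₀ r₀ := by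
  obtain ⟨c₀, F, hF⟩ := h
  refine ⟨c₀, fun r₀ => by_contra fun hr₀ => ?_⟩
  have hρ (c' r : α) : ∃ r', Γ.LegalMove r r' ∧
      ((∃ r'', Γ.LegalMove r r'' ∧ ¬ Γ.CopWins k c' r'') → ¬ Γ.CopWins k c' r') := by
    by_cases hesc : ∃ r'', Γ.LegalMove r r'' ∧ ¬ Γ.CopWins k c' r''
    · obtain ⟨r', hr', hr'esc⟩ := hesc
      exact ⟨r', hr', fun _ => hr'esc⟩
    · exact ⟨r, Or.inl rfl, fun h => (hesc h).elim⟩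
  choose ρ hρmove hρesc using hρ
  obtain ⟨r, hr0, hsucc⟩ := exists_robberSeq c₀ r₀ F ρ
  have hr (i : ℕ) : Γ.LegalMove (r i) (r (i + 1)) := hsucc i ▸ hρmove _ _
  obtain ⟨hcop, m, hcap⟩ := hF r hr
  have hescape (n : ℕ) : ¬ Γ.CopWins k (copSeq c₀ F r n) (r n) := by
    induction n with
    | zero => exact hr0 ▸ hr₀
    | succ n ih => exact hsucc n ▸ hρesc _ _ (exists_legalMove_not_copWins ih (hcop n))
  rcases hcap with hd | hd
  · exact hescape m (.capture _ (Or.inl rfl) hd)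
  · exact hescape m (.capture _ (hcop m) hd)

lemma rcNum_le (h : CopWinRC Γ k) : rcNum Γ ≤ k := Nat.sInf_le h

variable (Γ) in
lemma copWinRC_graphEcc [Finite α] (c₀ : α) : CopWinRC Γ (graphEcc Γ c₀) :=
  ⟨c₀, fun _ _ => c₀, fun r _ => ⟨fun n => Or.inl (by cases n <;> rfl),
    0, Or.inl (le_csSup (Set.finite_range _).bddAbove ⟨r 0, rfl⟩)⟩⟩

variable (Γ) in
lemma copWinRC_rcNum [Finite α] [Nonempty α] : CopWinRC Γ (rcNum Γ) :=
  Nat.sInf_mem (s := {k | CopWinRC Γ k}) ⟨_, copWinRC_graphEcc Γ (Classical.arbitrary α)⟩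

lemma rcNum_eq_zero_iff [Finite α] [Nonempty α] : rcNum Γ = 0 ↔ CopWinRC Γ 0 :=
  ⟨fun h => h ▸ copWinRC_rcNum Γ, fun h => Nat.le_zero.1 (rcNum_le h)⟩

end Game

section LexProd

variable {V W : Type*} {G : SimpleGraph V} {H : SimpleGraph W} {k : ℕ}

variable (G H) in
def layerHom (y : W) : G →g lexProd G H := ⟨fun a => (a, y), Or.inl⟩

variable (G H) in
def fiberHom (a : V) : H →g lexProd G H := ⟨fun y => (a, y), fun h => Or.inr ⟨rfl, h⟩⟩

lemma LegalMove.fst {X Y : V × W} (h : (lexProd G H).LegalMove X Y) : G.LegalMove X.1 Y.1 := by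
  rcases h with rfl | h | ⟨h, -⟩
  · exact Or.inl rfl
  · exact Or.inr h
  · exact Or.inl h.symm

lemma LegalMove.snd_of_fst_eq {X Y : V × W} (h : (lexProd G H).LegalMove X Y)
    (hXY : X.1 = Y.1) : H.LegalMove X.2 Y.2 := by
  rcases h with h | h | ⟨-, h⟩
  · exact Or.inl (congrArg Prod.snd h)
  · exact (G.loopless.irrefl _ (hXY ▸ h)).elim
  · exact Or.inr h

lemma lexProd_connected [Nontrivial V] [Nonempty W] (hG : G.Connected) :
    (lexProd G H).Connected := by
  have hfiber (a : V) (x y : W) : (lexProd G H).Reachable (a, x) (a, y) := by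
    obtain ⟨b, hab⟩ := hG.preconnected.exists_adj_of_nontrivial a
    exact (Adj.reachable (Or.inl hab : (lexProd G H).Adj (a, x) (b, x))).trans
      (Adj.reachable (Or.inl hab.symm))
  exact (connected_iff _).2 ⟨fun ⟨a, x⟩ ⟨g, y⟩ => ((hG a g).map (layerHom G H x)).trans
    (hfiber g x y), inferInstance⟩

lemma dist_fst_le_length (hG : G.Connected) {X Y : V × W} (q : (lexProd G H).Walk X Y) :
    G.dist X.1 Y.1 ≤ q.length := by
  induction q with
  | nil => simp
  | @cons X Z Y hXZ q ih =>
    have hstep : G.dist X.1 Z.1 ≤ 1 := by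
      rcases hXZ with h | ⟨h, -⟩
      · exact (dist_eq_one_iff_adj.2 h).le
      · simp [h]
    calc G.dist X.1 Y.1 ≤ G.dist X.1 Z.1 + G.dist Z.1 Y.1 := hG.dist_triangle
      _ ≤ (q.cons hXZ).length := by rw [Walk.length_cons]; omega

lemma dist_fst_le_dist_lexProd (hG : G.Connected) (hL : (lexProd G H).Connected)
    (X Y : V × W) : G.dist X.1 Y.1 ≤ (lexProd G H).dist X Y := by
  obtain ⟨q, hq⟩ := hL.exists_walk_length_eq_dist X Y
  exact hq ▸ dist_fst_le_length hG q

lemma dist_lexProd_le_of_ne (hG : G.Connected) {a g : V} (hag : a ≠ g) (x y : W) :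
    (lexProd G H).dist (a, x) (g, y) ≤ G.dist a g := by
  obtain ⟨p, hp⟩ := hG.exists_walk_length_eq_dist a g
  cases p with
  | nil => exact absurd rfl hag
  | cons hab q =>
    calc _ ≤ (Walk.cons (show (lexProd G H).Adj (a, x) (layerHom G H y _) from Or.inl hab)
          (q.map (layerHom G H y))).length := dist_le _
      _ = G.dist a g := by simp [← hp]

lemma dist_lexProd_mk_same_le (hH : H.Connected) (a : V) (x y : W) :
    (lexProd G H).dist (a, x) (a, y) ≤ H.dist x y := by
  obtain ⟨q, hq⟩ := hH.exists_walk_length_eq_dist x y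
  calc _ ≤ (q.map (fiberHom G H a)).length := dist_le _
    _ = H.dist x y := by simp [hq]

theorem CopWins.fst (hG : G.Connected) (hL : (lexProd G H).Connected) {X R : V × W}
    (h : (lexProd G H).CopWins k X R) : G.CopWins k X.1 R.1 := by
  induction h with
  | capture C' hC' hdist =>
    exact .capture C'.1 hC'.fst ((dist_fst_le_dist_lexProd hG hL _ _).trans hdist)
  | @step C R C' hC' _ ih =>
    exact .step C'.1 hC'.fst fun r' hr' => ih (r', R.2) (hr'.map (layerHom G H R.2))

theorem CopWins.lexProd_of_fiber {m : ℕ} (hkm : k ≤ m) (hG : G.Connected) {x₀ : W}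
    (hfiber : ∀ a y, (lexProd G H).CopWins m (a, x₀) (a, y)) {a g : V}
    (h : G.CopWins k a g) (y : W) : (lexProd G H).CopWins m (a, x₀) (g, y) := by
  induction h generalizing y with
  | @capture c r c' hc' hdist =>
    by_cases hcr : c' = r
    · subst hcr
      rcases hc' with rfl | hadj
      · exact hfiber c' y
      · exact .capture (c', y) (Or.inr (Or.inl hadj)) (by simp)
    · exact .capture (c', x₀) (hc'.map (layerHom G H x₀))
        ((dist_lexProd_le_of_ne hG hcr x₀ y).trans (hdist.trans hkm))
  | step c' hc' _ ih =>
    exact .step (c', x₀) (hc'.map (layerHom G H x₀)) fun R' hR' => ih R'.1 hR'.fst R'.2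

theorem CopWins.fiber (hH : H.Connected) {x y : W} (h : H.CopWins k x y) (a : V) :
    (lexProd G H).CopWins k (a, x) (a, y) := by
  induction h with
  | capture x' hx' hdist =>
    exact .capture (a, x') (hx'.map (fiberHom G H a))
      ((dist_lexProd_mk_same_le hH a _ _).trans hdist)
  | @step x y x' hx' _ ih =>
    refine .step (a, x') (hx'.map (fiberHom G H a)) fun ⟨g', y'⟩ hR' => ?_
    rcases hR'.fst with rfl | hadj
    · exact ih y' (hR'.snd_of_fst_eq rfl)
    · exact .capture (g', y') (Or.inr (Or.inl hadj)) (by simp)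

theorem CopWins.snd_of_fst_eq (hL : (lexProd G H).Connected)
    (hH : ∀ x, ∃ y, ¬ H.CopWins 0 x y) {C R : V × W} (h : (lexProd G H).CopWins 0 C R)
    (hCR : C.1 = R.1) : H.CopWins 0 C.2 R.2 := by
  induction h with
  | @capture C R C' hC' hdist =>
    obtain rfl : C' = R := hL.dist_eq_zero_iff.1 (Nat.le_zero.1 hdist)
    exact .capture C'.2 (hC'.snd_of_fst_eq hCR) (by simp)
  | @step C R C' hC' _ ih =>
    by_contra hnot
    rcases hC'.fst with hstay | hadj
    · obtain ⟨y', hy', hesc⟩ :=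
        exists_legalMove_not_copWins hnot (hC'.snd_of_fst_eq hstay.symm)
      exact hesc (ih (R.1, y') (hy'.map (fiberHom G H R.1)) (hstay.trans hCR))
    · obtain ⟨y', hesc⟩ := hH C'.2
      exact hesc (ih (C'.1, y') (Or.inr (Or.inl (hCR ▸ hadj))) rfl)

theorem CopWinRC.of_lexProd [Finite V] (hG : G.Connected) (hL : (lexProd G H).Connected)
    (h : CopWinRC (lexProd G H) k) : CopWinRC G k :=
  let ⟨C₀, hC₀⟩ := h.exists_copWins
  copWinRC_of_copWins fun r₀ => (hC₀ (r₀, C₀.2)).fst hG hL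

theorem CopWinRC.lexProd_max_one [Finite V] [Finite W] [Nontrivial V] [Nonempty W]
    (hG : G.Connected) (h : CopWinRC G k) : CopWinRC (lexProd G H) (max 1 k) := by
  obtain ⟨a₀, ha₀⟩ := h.exists_copWins
  have hfiber (a : V) (x y : W) : (lexProd G H).CopWins (max 1 k) (a, x) (a, y) := by
    obtain ⟨b, hab⟩ := hG.preconnected.exists_adj_of_nontrivial a
    exact .capture (b, y) (Or.inr (Or.inl hab))
      ((dist_eq_one_iff_adj.2 (Or.inl hab.symm)).le.trans (le_max_left 1 k))
  exact copWinRC_of_copWins fun R => (ha₀ R.1).lexProd_of_fiber (le_max_right 1 k) hG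
    (hfiber · (Classical.arbitrary W)) R.2

theorem CopWinRC.lexProd [Finite V] [Finite W] (hG : G.Connected) (hH : H.Connected)
    (hGk : CopWinRC G k) (hHk : CopWinRC H k) : CopWinRC (lexProd G H) k := by
  obtain ⟨a₀, ha₀⟩ := hGk.exists_copWins
  obtain ⟨x₀, hx₀⟩ := hHk.exists_copWins
  exact copWinRC_of_copWins fun R => (ha₀ R.1).lexProd_of_fiber le_rfl hG
    (fun a y => (hx₀ y).fiber hH a) R.2

theorem not_copWinRC_lexProd_zero [Finite W] (hL : (lexProd G H).Connected)
    (h : ¬ CopWinRC H 0) : ¬ CopWinRC (lexProd G H) 0 := by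
  intro hL0
  obtain ⟨C₀, hC₀⟩ := hL0.exists_copWins
  have hH (x : W) : ∃ y, ¬ H.CopWins 0 x y := by
    by_contra! hx
    exact h (copWinRC_of_copWins hx)
  obtain ⟨y₀, hy₀⟩ := hH C₀.2
  exact hy₀ ((hC₀ (C₀.1, y₀)).snd_of_fst_eq hL hH rfl)

end LexProd

end SimpleGraph

/-- For non-trivial connected graphs `G` and `H`: if `rc(G) ≥ 1` then
`rc(G ∘ H) = rc(G)`, and if `rc(G) = 0` then `rc(G ∘ H) = min 1 (rc H)`. -/
theorem rcNum_lexProd {V W : Type*} [Fintype V] [Fintype W]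
    [Nontrivial V] [Nontrivial W]
    (G : SimpleGraph V) (H : SimpleGraph W)
    (hG : G.Connected) (hH : H.Connected) :
    (1 ≤ rcNum G → rcNum (lexProd G H) = rcNum G) ∧
    (rcNum G = 0 → rcNum (lexProd G H) = min 1 (rcNum H)) := by
  have hL : (lexProd G H).Connected := lexProd_connected hG
  have hlower : rcNum G ≤ rcNum (lexProd G H) :=
    rcNum_le ((copWinRC_rcNum _).of_lexProd hG hL)
  have hupper : rcNum (lexProd G H) ≤ max 1 (rcNum G) :=
    rcNum_le ((copWinRC_rcNum G).lexProd_max_one hG)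
  refine ⟨fun hG1 => ?_, fun hG0 => ?_⟩
  · rw [max_eq_right hG1] at hupper
    exact le_antisymm hupper hlower
  · rcases Nat.eq_zero_or_pos (rcNum H) with hH0 | hH1
    · rw [hH0, Nat.min_zero, rcNum_eq_zero_iff]
      exact (rcNum_eq_zero_iff.1 hG0).lexProd hG hH (rcNum_eq_zero_iff.1 hH0)
    · have hne : rcNum (lexProd G H) ≠ 0 := mt rcNum_eq_zero_iff.1
        (not_copWinRC_lexProd_zero hL (mt rcNum_eq_zero_iff.2 hH1.ne'))
      rw [hG0] at hupper
      rw [min_eq_left hH1]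
      omega
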